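/- Let Ω ⊆ ℝ² be open, let w : ℝ² → ℂ be three times continuously differentiable on Ω, and let μ, g, k ∈ ℂ with k ≠ 0, g² + μ² = k², and ∂₁∂₁w + ∂₂∂₂w + μ²w = 0 on Ω. Define on Ω × ℝ the field N(x) = (1/k)·(i g ∂₁w(x̂), i g ∂₂w(x̂), μ² w(x̂))·e^{i g x₃}, where x = (x̂, x₃) with x̂ ∈ ℝ². Then: (a) curl(curl N)(x) − k²·N(x) = 0 for every x ∈ Ω × ℝ; and (b) for every x = (x̂, x₃) ∈ Ω × ℝ and every vector ν = (ν₁, ν₂, 0) ∈ ℝ³ one has ν × N(x) = (e^{i g x₃}/k)·( μ²w(x̂)·(ν₂, −ν₁, 0) + i g·(ν₁∂₂w(x̂) − ν₂∂₁w(x̂))·(0,0,1) ); in particular ν × N(x) = 0 whenever w(x̂) = 0 and ν₁∂₂w(x̂) = ν₂∂₁w(x̂). -/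

import Mathlib

/-!
The mode is a guided wave `N(x) = P(x̂) e^{igx₃}`, and the curl of a guided wave is again one, with
`∂₃` acting as multiplication by `ig` (`curlProfile`). For the profile of `N`, the dispersion relation
`g² + μ² = k²` and the symmetry of the second derivatives of `w` give `curl N = k M` on `Ω × ℝ`,
where `M = (∂₂w, −∂₁w, 0) e^{igx₃}` is the first-family mode; since `Ω × ℝ` is open this identity
may be differentiated once more, and the Helmholtz equation for `w` gives `curl M = k N`.
The trace formula is pointwise algebra.
-/

/-- Partial derivative in the `i`-th coordinate direction of a function on `ℝ²`. -/
noncomputable def pd2 (i : Fin 2) (f : (Fin 2 → ℝ) → ℂ) (x : Fin 2 → ℝ) : ℂ :=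
  fderiv ℝ f x (Pi.single i 1)

/-- Partial derivative in the `i`-th coordinate direction of a function on `ℝ³`. -/
noncomputable def pd3 (i : Fin 3) (f : (Fin 3 → ℝ) → ℂ) (x : Fin 3 → ℝ) : ℂ :=
  fderiv ℝ f x (Pi.single i 1)

/-- The curl of a complex vector field on `ℝ³`. -/
noncomputable def curl3 (F : (Fin 3 → ℝ) → Fin 3 → ℂ) (x : Fin 3 → ℝ) : Fin 3 → ℂ :=
  ![pd3 1 (fun y => F y 2) x - pd3 2 (fun y => F y 1) x,
    pd3 2 (fun y => F y 0) x - pd3 0 (fun y => F y 2) x,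
    pd3 0 (fun y => F y 1) x - pd3 1 (fun y => F y 0) x]

/-- Cross product of complex 3-vectors. -/
def crossC (a b : Fin 3 → ℂ) : Fin 3 → ℂ :=
  ![a 1 * b 2 - a 2 * b 1, a 2 * b 0 - a 0 * b 2, a 0 * b 1 - a 1 * b 0]

open Complex Filter Topology

noncomputable def crossSection : (Fin 3 → ℝ) →L[ℝ] (Fin 2 → ℝ) :=
  ContinuousLinearMap.pi ![ContinuousLinearMap.proj 0, ContinuousLinearMap.proj 1]

lemma crossSection_apply (y : Fin 3 → ℝ) : crossSection y = ![y 0, y 1] := by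
  funext j; fin_cases j <;> rfl

lemma crossSection_single (i : Fin 3) :
    crossSection (Pi.single i 1) = ![Pi.single 0 1, Pi.single 1 1, 0] i := by
  rw [crossSection_apply]; fin_cases i <;> funext j <;> fin_cases j <;> simp

lemma pd3_mul_exp (g : ℂ) {f : (Fin 2 → ℝ) → ℂ} {x : Fin 3 → ℝ}
    (hf : DifferentiableAt ℝ f ![x 0, x 1]) (i : Fin 3) :
    pd3 i (fun y => f ![y 0, y 1] * exp (I * g * (y 2 : ℂ))) x =
      ![pd2 0 f ![x 0, x 1], pd2 1 f ![x 0, x 1], I * g * f ![x 0, x 1]] i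
        * exp (I * g * (x 2 : ℂ)) := by
  set L : (Fin 3 → ℝ) →L[ℝ] ℂ := (I * g) • (ofRealCLM.comp (ContinuousLinearMap.proj 2))
  have hL : ∀ y, L y = I * g * (y 2 : ℂ) := fun y => by simp [L]
  have hf' : DifferentiableAt ℝ f (crossSection x) := by rwa [crossSection_apply]
  have hderiv := (hf'.hasFDerivAt.comp x crossSection.hasFDerivAt).fun_mul
      ((hasDerivAt_exp (L x)).comp_hasFDerivAt x L.hasFDerivAt)
  simp only [Function.comp_def, crossSection_apply, hL] at hderiv
  rw [pd3, hderiv.fderiv]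
  fin_cases i <;> simp [crossSection_single, pd2, hL] <;> ring

noncomputable def guidedWave (g : ℂ) (P : (Fin 2 → ℝ) → Fin 3 → ℂ) (y : Fin 3 → ℝ)
    (i : Fin 3) : ℂ :=
  P ![y 0, y 1] i * exp (I * g * (y 2 : ℂ))

noncomputable def curlProfile (g : ℂ) (P : (Fin 2 → ℝ) → Fin 3 → ℂ) (z : Fin 2 → ℝ) :
    Fin 3 → ℂ :=
  ![pd2 1 (fun z => P z 2) z - I * g * P z 1,
    I * g * P z 0 - pd2 0 (fun z => P z 2) z,
    pd2 0 (fun z => P z 1) z - pd2 1 (fun z => P z 0) z]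

lemma curl3_guidedWave (g : ℂ) {P : (Fin 2 → ℝ) → Fin 3 → ℂ} {x : Fin 3 → ℝ}
    (hP : ∀ j, DifferentiableAt ℝ (fun z => P z j) ![x 0, x 1]) :
    curl3 (guidedWave g P) x = guidedWave g (curlProfile g P) x := by
  have h := fun i j => pd3_mul_exp g (hP j) i
  funext i
  fin_cases i <;> simp [curl3, guidedWave, curlProfile, h] <;> ring

lemma curl3_congr_of_eventuallyEq {F G : (Fin 3 → ℝ) → Fin 3 → ℂ} {x : Fin 3 → ℝ}
    (h : F =ᶠ[𝓝 x] G) : curl3 F x = curl3 G x := by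
  have hc : ∀ i j, pd3 i (fun y => F y j) x = pd3 i (fun y => G y j) x := fun i j => by
    rw [pd3, pd3, EventuallyEq.fderiv_eq (h.mono fun y hy => congrFun hy j)]
  simp only [curl3, hc]

lemma ContDiffAt.differentiableAt_pd2 {w : (Fin 2 → ℝ) → ℂ} {z : Fin 2 → ℝ}
    (hw : ContDiffAt ℝ 2 w z) (j : Fin 2) : DifferentiableAt ℝ (pd2 j w) z :=
  ((hw.fderiv_right (m := 1) (by norm_num)).differentiableAt one_ne_zero).clm_apply
    (differentiableAt_const _)

lemma ContDiffAt.pd2_comm {w : (Fin 2 → ℝ) → ℂ} {z : Fin 2 → ℝ}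
    (hw : ContDiffAt ℝ 2 w z) : pd2 0 (pd2 1 w) z = pd2 1 (pd2 0 w) z := by
  have hdiff := (hw.fderiv_right (m := 1) (by norm_num)).differentiableAt one_ne_zero
  have hsecond : ∀ u v, pd2 u (pd2 v w) z =
      fderiv ℝ (fderiv ℝ w) z (Pi.single u 1) (Pi.single v 1) := fun u v => by
    unfold pd2
    simp [fderiv_clm_apply hdiff (differentiableAt_const _)]
  rw [hsecond, hsecond]
  exact hw.isSymmSndFDerivAt (by simp) _ _

lemma pd2_const_mul {f : (Fin 2 → ℝ) → ℂ} {z : Fin 2 → ℝ} (c : ℂ)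
    (hf : DifferentiableAt ℝ f z) (i : Fin 2) :
    pd2 i (fun z => c * f z) z = c * pd2 i f z := by
  simp [pd2, fderiv_const_mul hf]

lemma pd2_neg (f : (Fin 2 → ℝ) → ℂ) (z : Fin 2 → ℝ) (i : Fin 2) :
    pd2 i (fun z => -f z) z = -pd2 i f z := by
  simp [pd2]

lemma pd2_zero (z : Fin 2 → ℝ) (i : Fin 2) : pd2 i (fun _ => 0) z = 0 := by
  simp [pd2]

noncomputable def nProfile (mu g k : ℂ) (w : (Fin 2 → ℝ) → ℂ) (z : Fin 2 → ℝ) : Fin 3 → ℂ :=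
  ![I * g / k * pd2 0 w z, I * g / k * pd2 1 w z, mu ^ 2 / k * w z]

/-- `k` times the profile of the first-family mode `M`. -/
noncomputable def mProfile (k : ℂ) (w : (Fin 2 → ℝ) → ℂ) (z : Fin 2 → ℝ) : Fin 3 → ℂ :=
  ![k * pd2 1 w z, -k * pd2 0 w z, 0]

section
variable {w : (Fin 2 → ℝ) → ℂ} {z : Fin 2 → ℝ} {mu g k : ℂ}

lemma ContDiffAt.differentiableAt_nProfile (hw : ContDiffAt ℝ 2 w z) (j : Fin 3) :
    DifferentiableAt ℝ (fun z => nProfile mu g k w z j) z := by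
  have := hw.differentiableAt two_ne_zero
  have := hw.differentiableAt_pd2
  fin_cases j <;> simp [nProfile] <;> fun_prop

lemma ContDiffAt.differentiableAt_mProfile (hw : ContDiffAt ℝ 2 w z) (j : Fin 3) :
    DifferentiableAt ℝ (fun z => mProfile k w z j) z := by
  have := hw.differentiableAt_pd2
  fin_cases j <;> simp [mProfile] <;> fun_prop

lemma curlProfile_nProfile (hk : k ≠ 0) (hrel : g ^ 2 + mu ^ 2 = k ^ 2)
    (hw : ContDiffAt ℝ 2 w z) :
    curlProfile g (nProfile mu g k w) z = mProfile k w z := by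
  have hpd := hw.differentiableAt_pd2
  funext i
  fin_cases i <;> simp only [curlProfile, nProfile, mProfile, Fin.isValue, Fin.zero_eta,
    Fin.mk_one, Fin.reduceFinMk, Matrix.cons_val, Matrix.cons_val_one, Matrix.cons_val_zero,
    pd2_const_mul _ (hw.differentiableAt two_ne_zero), pd2_const_mul _ (hpd _), hw.pd2_comm,
    sub_self, neg_mul]
  · field_simp
    linear_combination pd2 1 w z * hrel - g ^ 2 * pd2 1 w z * I_sq
  · field_simp
    linear_combination -pd2 0 w z * hrel + g ^ 2 * pd2 0 w z * I_sq

lemma curlProfile_mProfile (hk : k ≠ 0)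
    (hHelm : pd2 0 (pd2 0 w) z + pd2 1 (pd2 1 w) z + mu ^ 2 * w z = 0)
    (hw : ContDiffAt ℝ 2 w z) :
    curlProfile g (mProfile k w) z = k ^ 2 • nProfile mu g k w z := by
  have hpd := hw.differentiableAt_pd2
  funext i
  fin_cases i <;> simp only [curlProfile, nProfile, mProfile, Fin.isValue, Fin.zero_eta,
    Fin.mk_one, Fin.reduceFinMk, Matrix.cons_val, Matrix.cons_val_one, Matrix.cons_val_zero,
    pd2_const_mul _ (hpd _), pd2_neg, pd2_zero, neg_mul, mul_neg, sub_neg_eq_add, zero_add,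
    sub_zero, Pi.smul_apply, smul_eq_mul]
  · field_simp
  · field_simp
  · field_simp
    linear_combination -hHelm

end

/-- The second-family waveguide mode `N` satisfies the time-harmonic Maxwell equation
`curl curl N − k²N = 0` in `Ω × ℝ`, and its tangential trace against a horizontal
vector `ν = (ν₁, ν₂, 0)` is
`ν × N = (e^{igx₃}/k)·(μ²w·(ν₂,−ν₁,0) + ig(ν₁∂₂w − ν₂∂₁w)·(0,0,1))`. -/
theorem mode_N_maxwell_and_bc (Ω : Set (Fin 2 → ℝ)) (hΩ : IsOpen Ω)
    (w : (Fin 2 → ℝ) → ℂ) (hw : ContDiffOn ℝ 3 w Ω)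
    (mu g k : ℂ) (hk : k ≠ 0) (hrel : g ^ 2 + mu ^ 2 = k ^ 2)
    (hHelm : ∀ xh ∈ Ω, pd2 0 (pd2 0 w) xh + pd2 1 (pd2 1 w) xh + mu ^ 2 * w xh = 0)
    (N : (Fin 3 → ℝ) → Fin 3 → ℂ)
    (hN : ∀ x : Fin 3 → ℝ, ∀ i : Fin 3, N x i =
      (1 / k) * ![Complex.I * g * pd2 0 w ![x 0, x 1],
                  Complex.I * g * pd2 1 w ![x 0, x 1],
                  mu ^ 2 * w ![x 0, x 1]] i
        * Complex.exp (Complex.I * g * ((x 2 : ℝ) : ℂ))) :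
    ∀ x : Fin 3 → ℝ, ![x 0, x 1] ∈ Ω →
      (∀ i, curl3 (curl3 N) x i - k ^ 2 * N x i = 0) ∧
      (∀ ν₁ ν₂ : ℝ, ∀ i : Fin 3,
        crossC ![(ν₁ : ℂ), (ν₂ : ℂ), 0] (N x) i =
          (Complex.exp (Complex.I * g * ((x 2 : ℝ) : ℂ)) / k) *
            (mu ^ 2 * w ![x 0, x 1] * ![(ν₂ : ℂ), -(ν₁ : ℂ), 0] i
              + Complex.I * g *
                ((ν₁ : ℂ) * pd2 1 w ![x 0, x 1] - (ν₂ : ℂ) * pd2 0 w ![x 0, x 1])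
                * ![0, 0, 1] i)) ∧
      (∀ ν₁ ν₂ : ℝ,
        w ![x 0, x 1] = 0 →
        (ν₁ : ℂ) * pd2 1 w ![x 0, x 1] = (ν₂ : ℂ) * pd2 0 w ![x 0, x 1] →
          ∀ i, crossC ![(ν₁ : ℂ), (ν₂ : ℂ), 0] (N x) i = 0) := by
  have hw2 : ∀ z ∈ Ω, ContDiffAt ℝ 2 w z := fun z hz =>
    (hw.of_le (by norm_num)).contDiffAt (hΩ.mem_nhds hz)
  have hNwave : N = guidedWave g (nProfile mu g k w) := by
    funext y i
    rw [hN]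
    fin_cases i <;> simp [guidedWave, nProfile] <;> ring
  have hcurlN : ∀ y, ![y 0, y 1] ∈ Ω → curl3 N y = guidedWave g (mProfile k w) y := by
    intro y hy
    rw [hNwave, curl3_guidedWave g (hw2 _ hy).differentiableAt_nProfile]
    funext i
    simp only [guidedWave, curlProfile_nProfile hk hrel (hw2 _ hy)]
  intro x hx
  have hcylinder : {y : Fin 3 → ℝ | ![y 0, y 1] ∈ Ω} ∈ 𝓝 x :=
    (hΩ.preimage (by fun_prop)).mem_nhds hx
  have hcurlcurlN : curl3 (curl3 N) x = k ^ 2 • N x := by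
    rw [curl3_congr_of_eventuallyEq (eventually_of_mem hcylinder hcurlN),
      curl3_guidedWave g (hw2 _ hx).differentiableAt_mProfile, hNwave]
    funext i
    simp [guidedWave, curlProfile_mProfile hk (hHelm _ hx) (hw2 _ hx), mul_assoc]
  refine ⟨fun i => by simp [hcurlcurlN], fun ν₁ ν₂ i => ?_, fun ν₁ ν₂ hw0 hpd i => ?_⟩
  · fin_cases i <;> simp [crossC, hN x] <;> field_simp
  · fin_cases i <;> simp only [crossC, hN x, hw0, Fin.isValue, Fin.zero_eta, Fin.mk_one,
      Fin.reduceFinMk, Matrix.cons_val, Matrix.cons_val_one, Matrix.cons_val_zero, mul_zero,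
      zero_mul, sub_self]
    linear_combination (I * g / k * exp (I * g * (x 2 : ℂ))) * hpd
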